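/- Let p ≪ q in Minkowski space ℝ^{1,1} with p = (-1,0), q = (1,0), and define λ(t,x) = (1/2)·log( ((1+t)² - x²) / ((1-t)² - x²) ) on the diamond O = {(t,x) : |t| + |x| < 1}. If (t₁,x₁), (t₂,x₂) ∈ O with t₂ - t₁ ≥ |x₂ - x₁| and (t₁,x₁) ≠ (t₂,x₂), then λ(t₁,x₁) < λ(t₂,x₂). -/

import Mathlib

/-!
In the null coordinates `u = t + x`, `v = t - x` the time function splits as
`λ = artanh u + artanh v`, and a causal relation is exactly `u₁ ≤ u₂ ∧ v₁ ≤ v₂`.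
Since `artanh` is strictly increasing on `(-1, 1)`, the sum strictly increases
as soon as one of the two null coordinates does, i.e. whenever the points differ.
-/

/-- The intrinsic time function on the standard diamond in `ℝ^{1,1}`. -/
noncomputable def diamondTime (t x : ℝ) : ℝ :=
  (1 / 2) * Real.log (((1 + t) ^ 2 - x ^ 2) / ((1 - t) ^ 2 - x ^ 2))

open Real Set

theorem StrictMonoOn.add_lt_add_of_le_of_le_of_ne {α β : Type*} [PartialOrder α]
    [AddCommMonoid β] [PartialOrder β] [IsOrderedCancelAddMonoid β] {f : α → β} {s : Set α}
    (hf : StrictMonoOn f s) {a₁ a₂ b₁ b₂ : α} (ha₁ : a₁ ∈ s) (ha₂ : a₂ ∈ s) (hb₁ : b₁ ∈ s)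
    (hb₂ : b₂ ∈ s) (ha : a₁ ≤ a₂) (hb : b₁ ≤ b₂) (hne : (a₁, b₁) ≠ (a₂, b₂)) :
    f a₁ + f b₁ < f a₂ + f b₂ := by
  rcases ha.lt_or_eq with ha | rfl
  · exact add_lt_add_of_lt_of_le (hf ha₁ ha₂ ha) (hf.monotoneOn hb₁ hb₂ hb)
  · have hb : b₁ < b₂ := hb.lt_of_ne fun h ↦ hne (h ▸ rfl)
    exact add_lt_add_right (hf hb₁ hb₂ hb) _

lemma add_mem_Ioo_and_sub_mem_Ioo {t x : ℝ} (h : |t| + |x| < 1) :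
    t + x ∈ Ioo (-1) 1 ∧ t - x ∈ Ioo (-1) 1 :=
  ⟨abs_lt.mp ((abs_add_le t x).trans_lt h), abs_lt.mp ((abs_sub t x).trans_lt h)⟩

lemma diamondTime_eq_artanh_add_artanh {t x : ℝ} (h : |t| + |x| < 1) :
    diamondTime t x = artanh (t + x) + artanh (t - x) := by
  obtain ⟨⟨hu₁, hu₂⟩, ⟨hv₁, hv₂⟩⟩ := add_mem_Ioo_and_sub_mem_Ioo h
  have hfactor : ((1 + t) ^ 2 - x ^ 2) / ((1 - t) ^ 2 - x ^ 2)
      = (1 + (t + x)) / (1 - (t + x)) * ((1 + (t - x)) / (1 - (t - x))) := by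
    rw [div_mul_div_comm]
    congr 1 <;> ring
  have hu_pos : 0 < (1 + (t + x)) / (1 - (t + x)) := div_pos (by linarith) (by linarith)
  have hv_pos : 0 < (1 + (t - x)) / (1 - (t - x)) := div_pos (by linarith) (by linarith)
  rw [diamondTime, hfactor, log_mul hu_pos.ne' hv_pos.ne',
    artanh_eq_half_log ⟨hu₁.le, hu₂.le⟩, artanh_eq_half_log ⟨hv₁.le, hv₂.le⟩]
  ring

/-- the time function `λ(t,x) = ½ log(((1+t)²-x²)/((1-t)²-x²))`
is strictly increasing along causal relations in the standard diamond
`O = {(t,x) : |t|+|x| < 1}`. -/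
theorem stmt_13 (t₁ x₁ t₂ x₂ : ℝ)
    (h₁ : |t₁| + |x₁| < 1) (h₂ : |t₂| + |x₂| < 1)
    (hcausal : |x₂ - x₁| ≤ t₂ - t₁) (hne : (t₁, x₁) ≠ (t₂, x₂)) :
    diamondTime t₁ x₁ < diamondTime t₂ x₂ := by
  obtain ⟨hu₁, hv₁⟩ := add_mem_Ioo_and_sub_mem_Ioo h₁
  obtain ⟨hu₂, hv₂⟩ := add_mem_Ioo_and_sub_mem_Ioo h₂
  obtain ⟨hx_lower, hx_upper⟩ := abs_le.mp hcausal
  rw [diamondTime_eq_artanh_add_artanh h₁, diamondTime_eq_artanh_add_artanh h₂]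
  refine strictMonoOn_artanh.add_lt_add_of_le_of_le_of_ne hu₁ hu₂ hv₁ hv₂
    (by linarith) (by linarith) fun h ↦ hne ?_
  obtain ⟨hu, hv⟩ := Prod.mk.inj h
  exact Prod.ext (by linarith) (by linarith)
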